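/- Let T be a triangulated category with products, G a Σ-stable set of objects generating T (i.e., G^⊥ = 0), and C a Σ-stable set with Ψ(C)^s ⊆ Φ(G) for some s ∈ ℕ*. Then T is the smallest colocalizing subcategory containing C, i.e., T = Coloc(C). -/

import Mathlib

/-!
Fix `X` and a colocalizing `L ⊇ 𝒞`. Starting from `X ⟶ 0`, repeatedly replace the fibre `F` of
`X ⟶ D` (with `D ∈ L`) by a map `F' ⟶ F` killing the canonical map
`F ⟶ ∏_{c ∈ 𝒞, F ⟶ c} c`: it is `𝒞`-cophantom, and the new cone `D'` is an extension of `D` by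
that product, so stays in `L`. This yields a tower of triangles `Fₙ ⟶ X ⟶ Dₙ ⟶ Fₙ⟦1⟧` with
`Dₙ ∈ L` in which `s` consecutive transition maps of `Fₙ` compose to a `𝒢`-phantom map.
Hence for `G ∈ 𝒢` the inverse system `Hom(G, Dₙ)` is pro-isomorphic to the constant system
`Hom(G, X)`: its `lim` is `Hom(G, X)` and its `lim¹` vanishes. So `X` maps to the homotopy limit
of the `Dₙ` (the fibre of `1 - shift` on `∏ Dₙ`, an object of `L`) by a map that is bijective on
`Hom(G, -)` for every `G ∈ 𝒢`, i.e. by an isomorphism, as `𝒢` generates.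
-/

open CategoryTheory CategoryTheory.Limits CategoryTheory.Pretriangulated

universe v u

variable {C : Type u} [Category.{v} C]

def SigmaStable [HasShift C ℤ] (S : Set C) : Prop :=
  ∀ X ∈ S, X⟦(1 : ℤ)⟧ ∈ S ∧ X⟦(-1 : ℤ)⟧ ∈ S

def IsPhantom [Limits.HasZeroMorphisms C] (𝒢 : Set C) {X Y : C} (φ : X ⟶ Y) : Prop :=
  ∀ G ∈ 𝒢, ∀ f : G ⟶ X, f ≫ φ = 0

def IsCophantom [Limits.HasZeroMorphisms C] (𝒞 : Set C) {X Y : C} (ψ : X ⟶ Y) : Prop :=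
  ∀ c ∈ 𝒞, ∀ g : Y ⟶ c, ψ ≫ g = 0

/-- composites of `n+1` maps satisfying `I`: the generators of the ideal `I^{n+1}`. -/
def compPow (I : MorphismProperty C) : ℕ → MorphismProperty C
  | 0 => I
  | n + 1 => fun X Z f => ∃ (Y : C) (g : X ⟶ Y) (h : Y ⟶ Z),
      I g ∧ compPow I n h ∧ f = g ≫ h

/-- A colocalizing subcategory: a (strictly full) triangulated subcategory closed under
products. -/
structure IsColocalizing [Preadditive C] [HasZeroObject C] [HasShift C ℤ]
    [∀ n : ℤ, (shiftFunctor C n).Additive] [Pretriangulated C] (L : Set C) : Prop where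
  zero : ∀ X : C, IsZero X → X ∈ L
  iso_closed : ∀ X Y : C, (X ≅ Y) → X ∈ L → Y ∈ L
  shift : ∀ X ∈ L, X⟦(1 : ℤ)⟧ ∈ L ∧ X⟦(-1 : ℤ)⟧ ∈ L
  ext₂ : ∀ T ∈ (distTriang C), T.obj₁ ∈ L → T.obj₃ ∈ L → T.obj₂ ∈ L
  products : ∀ (ι : Type (max u v)) (f : ι → C) (_ : HasProduct f),
    (∀ i, f i ∈ L) → (∏ᶜ f) ∈ L

open Opposite

lemma exists_eq_shiftNegShift_inv_comp [HasShift C ℤ] {G X : C} (y : G ⟶ X⟦(1 : ℤ)⟧) :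
    ∃ y' : G⟦(-1 : ℤ)⟧ ⟶ X, y = (shiftNegShift G (1 : ℤ)).inv ≫ y'⟦(1 : ℤ)⟧' :=
  ⟨(shiftFunctor C (1 : ℤ)).preimage ((shiftNegShift G (1 : ℤ)).hom ≫ y), by simp⟩

section Shift

variable [Preadditive C] [HasShift C ℤ] [∀ n : ℤ, (shiftFunctor C n).Additive]

variable {𝒢 : Set C} (h𝒢 : ∀ G ∈ 𝒢, G⟦(-1 : ℤ)⟧ ∈ 𝒢)
include h𝒢

lemma IsPhantom.shift {X Y : C} {φ : X ⟶ Y} (hφ : IsPhantom 𝒢 φ) :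
    IsPhantom 𝒢 (φ⟦(1 : ℤ)⟧') := by
  intro G hG y
  obtain ⟨y', rfl⟩ := exists_eq_shiftNegShift_inv_comp y
  rw [Category.assoc, ← Functor.map_comp, hφ _ (h𝒢 G hG) y', Functor.map_zero, comp_zero]

lemma eq_zero_of_comp_shift_map_eq_zero {X Y : C} {φ : X ⟶ Y}
    (hφ : ∀ G ∈ 𝒢, ∀ f : G ⟶ X, f ≫ φ = 0 → f = 0) {G : C} (hG : G ∈ 𝒢)
    {y : G ⟶ X⟦(1 : ℤ)⟧} (hy : y ≫ φ⟦(1 : ℤ)⟧' = 0) : y = 0 := by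
  obtain ⟨y', rfl⟩ := exists_eq_shiftNegShift_inv_comp y
  have hy' : y' ≫ φ = 0 := by
    rw [Category.assoc, ← Functor.map_comp] at hy
    exact (Functor.map_eq_zero_iff _).1 ((cancel_epi _).1 (hy.trans comp_zero.symm))
  rw [hφ _ (h𝒢 G hG) y' hy', Functor.map_zero, comp_zero]

end Shift

lemma compPow_map_homOfLE (I : MorphismProperty C) (F : ℕᵒᵖ ⥤ C)
    (hF : ∀ n : ℕ, I (F.map (homOfLE (n.le_add_right 1)).op)) (n : ℕ) :
    ∀ k : ℕ, compPow I k (F.map (homOfLE (n.le_add_right (k + 1))).op)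
  | 0 => hF n
  | k + 1 => ⟨_, _, _, hF (n + (k + 1)), compPow_map_homOfLE I F hF n k,
      by rw [← F.map_comp]; rfl⟩

section Pretriangulated

variable [Preadditive C] [HasZeroObject C] [HasShift C ℤ]
  [∀ n : ℤ, (shiftFunctor C n).Additive] [Pretriangulated C]

lemma isIso_of_bijective_on_generators {𝒢 : Set C} (h𝒢 : ∀ G ∈ 𝒢, G⟦(-1 : ℤ)⟧ ∈ 𝒢)
    (hgen : ∀ X : C, (∀ G ∈ 𝒢, ∀ f : G ⟶ X, f = 0) → IsZero X) {X Y : C} (κ : X ⟶ Y)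
    (hinj : ∀ G ∈ 𝒢, ∀ f : G ⟶ X, f ≫ κ = 0 → f = 0)
    (hsurj : ∀ G ∈ 𝒢, ∀ g : G ⟶ Y, ∃ f : G ⟶ X, f ≫ κ = g) : IsIso κ := by
  obtain ⟨Z, k₂, k₃, hK⟩ := distinguished_cocone_triangle κ
  refine (Triangle.isZero₃_iff_isIso₁ _ hK).1 (hgen Z fun G hG x => ?_)
  have h₁₂ : κ ≫ k₂ = 0 := comp_distTriang_mor_zero₁₂ _ hK
  have h₃₁ : k₃ ≫ κ⟦(1 : ℤ)⟧' = 0 := comp_distTriang_mor_zero₃₁ _ hK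
  have hx : x ≫ k₃ = 0 := eq_zero_of_comp_shift_map_eq_zero h𝒢 hinj hG
    (by rw [Category.assoc, h₃₁, comp_zero])
  obtain ⟨y : G ⟶ Y, hy : x = y ≫ k₂⟩ := Triangle.coyoneda_exact₃ _ hK x hx
  obtain ⟨f, rfl⟩ := hsurj G hG y
  rw [hy, Category.assoc, h₁₂, comp_zero]

lemma Triangle.eq_zero_of_comp_mor₁_eq_zero {T : Triangle C} (hT : T ∈ distTriang C) {G : C}
    (hsurj : ∀ z : G⟦(1 : ℤ)⟧ ⟶ T.obj₃, ∃ z' : G⟦(1 : ℤ)⟧ ⟶ T.obj₂, z' ≫ T.mor₂ = z)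
    {g : G ⟶ T.obj₁} (hg : g ≫ T.mor₁ = 0) : g = 0 := by
  obtain ⟨z, hz⟩ := T.coyoneda_exact₁ hT (g⟦(1 : ℤ)⟧')
    (by rw [← Functor.map_comp, hg, Functor.map_zero])
  obtain ⟨z', rfl⟩ := hsurj z
  rw [Category.assoc, comp_distTriang_mor_zero₂₃ _ hT, comp_zero,
    Functor.map_eq_zero_iff] at hz
  exact hz

/-- A substitute for the octahedral axiom, which `Pretriangulated` lacks: `D'` is built first as an
extension of `D` by `P`, and the map `χ₀` induced on fibres of `X ⟶ D'` and `X ⟶ D` is then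
corrected by a map through `D⟦-1⟧` so as to kill `p`. -/
lemma exists_distTriang_comp_of_distTriang {F X D P : C} {u : F ⟶ X} {v : X ⟶ D}
    {w : D ⟶ F⟦(1 : ℤ)⟧} (hT : Triangle.mk u v w ∈ distTriang C) (p : F ⟶ P) :
    ∃ (F' D' : C) (χ : F' ⟶ F) (v' : X ⟶ D') (w' : D' ⟶ F'⟦(1 : ℤ)⟧) (a : P ⟶ D')
      (m : D' ⟶ D), χ ≫ p = 0 ∧ Triangle.mk (χ ≫ u) v' w' ∈ distTriang C ∧
        Triangle.mk a m (w ≫ p⟦(1 : ℤ)⟧') ∈ distTriang C := by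
  obtain ⟨D', a, m, hE⟩ := distinguished_cocone_triangle₂ (w ≫ p⟦(1 : ℤ)⟧')
  obtain ⟨v' : X ⟶ D', hv'₁ : u ≫ v' = p ≫ a, hv'₂ : v ≫ 𝟙 D = v' ≫ m⟩ :=
    complete_distinguished_triangle_morphism₂ _ _ hT hE p (𝟙 D) (Category.id_comp _).symm
  obtain ⟨F₀, u₀, w₀, hT₀⟩ := distinguished_cocone_triangle₁ v'
  obtain ⟨χ₀ : F₀ ⟶ F, hχ₀ : u₀ ≫ 𝟙 X = χ₀ ≫ u, -⟩ :=
    complete_distinguished_triangle_morphism₁ _ _ hT₀ hT (𝟙 X) m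
      (show v' ≫ m = 𝟙 X ≫ v by rw [Category.id_comp, ← hv'₂, Category.comp_id])
  let δ : D⟦(-1 : ℤ)⟧ ⟶ F := (Triangle.mk u v w).invRotate.mor₁
  let ε : D⟦(-1 : ℤ)⟧ ⟶ P := (Triangle.mk a m (w ≫ p⟦(1 : ℤ)⟧')).invRotate.mor₁
  let φ : Triangle.mk u v w ⟶ Triangle.mk a m (w ≫ p⟦(1 : ℤ)⟧') :=
    Triangle.homMk _ _ p v' (𝟙 D) hv'₁ hv'₂ (Category.id_comp _).symm
  have hδp : δ ≫ p = ε := by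
    have h := ((invRotate C).map φ).comm₁
    change δ ≫ p = (𝟙 D)⟦(-1 : ℤ)⟧' ≫ ε at h
    rwa [CategoryTheory.Functor.map_id, Category.id_comp] at h
  have hδu : δ ≫ u = 0 := comp_distTriang_mor_zero₁₂ _ (inv_rot_of_distTriang _ hT)
  have hu₀ : u₀ = χ₀ ≫ u := by rw [← hχ₀, Category.comp_id]
  have hχ₀pa : (χ₀ ≫ p) ≫ a = 0 := by
    rw [Category.assoc, ← hv'₁, ← Category.assoc, ← hu₀]
    exact comp_distTriang_mor_zero₁₂ _ hT₀
  obtain ⟨ζ : F₀ ⟶ D⟦(-1 : ℤ)⟧, hζ : χ₀ ≫ p = ζ ≫ ε⟩ :=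
    Triangle.coyoneda_exact₂ _ (inv_rot_of_distTriang _ hE) (χ₀ ≫ p) hχ₀pa
  refine ⟨F₀, D', χ₀ - ζ ≫ δ, v', w₀, a, m, ?_, ?_, hE⟩
  · rw [Preadditive.sub_comp, Category.assoc, hδp, hζ, sub_self]
  · have : (χ₀ - ζ ≫ δ) ≫ u = u₀ := by
      rw [Preadditive.sub_comp, Category.assoc, hδu, comp_zero, sub_zero, hu₀]
    rw [this]
    exact hT₀

namespace IsColocalizing

variable {L : Set C} (hL : IsColocalizing L)
include hL

lemma mem₁_of_distTriang {T : Triangle C} (hT : T ∈ distTriang C) (h₂ : T.obj₂ ∈ L)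
    (h₃ : T.obj₃ ∈ L) : T.obj₁ ∈ L :=
  hL.ext₂ _ (inv_rot_of_distTriang _ hT) (hL.shift _ h₃).2 h₂

lemma piObj_mem [HasProducts.{max u v} C] {ι : Type*} [Small.{max u v} ι] (f : ι → C)
    [HasProduct f] (hf : ∀ i, f i ∈ L) : ∏ᶜ f ∈ L := by
  let e := (equivShrink.{max u v} ι).symm
  exact hL.iso_closed _ _ (Pi.reindex e f) (hL.products _ (f ∘ e) inferInstance fun _ => hf _)

end IsColocalizing

end Pretriangulated

namespace InverseSequence

lemma app_comp_map {D : ℕᵒᵖ ⥤ C} {X : C} (v : (Functor.const ℕᵒᵖ).obj X ⟶ D) {i j : ℕ}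
    (h : i ≤ j) : v.app (op j) ≫ D.map (homOfLE h).op = v.app (op i) := by
  simpa using (v.naturality (homOfLE h).op).symm

lemma comp_map_of_compatible {D : ℕᵒᵖ ⥤ C} {H : C} {c : ∀ n, H ⟶ D.obj (op n)}
    (hc : ∀ n, c (n + 1) ≫ D.map (homOfLE (n.le_add_right 1)).op = c n) {i j : ℕ} (h : i ≤ j) :
    c j ≫ D.map (homOfLE h).op = c i :=
  app_comp_map (NatTrans.ofOpSequence (F := (Functor.const ℕᵒᵖ).obj H) c
    fun n => by simp [hc]) h

variable [Preadditive C] (D : ℕᵒᵖ ⥤ C) {X H : C} (v : (Functor.const ℕᵒᵖ).obj X ⟶ D)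

section Lift

variable (N : ℕ)
  (hlift : ∀ n (z : H ⟶ D.obj (op (n + N))),
    ∃ g : H ⟶ X, z ≫ D.map (homOfLE (n.le_add_right N)).op = g ≫ v.app (op n))
include hlift

/-- `lim¹ₙ Hom(H, Dₙ) = 0`. Writing `(S c)ₙ = c (n + 1) ≫ D.map _`, the family `∑_{k<N} Sᵏ c`
solves the equation up to `S^N c`, which factors through `v` by `hlift`; that error is absorbed by
the partial sums of the factorisations. -/
lemma exists_sub_comp_map_eq (c : ∀ n, H ⟶ D.obj (op n)) :
    ∃ x : ∀ n, H ⟶ D.obj (op n),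
      ∀ n, x n - x (n + 1) ≫ D.map (homOfLE (n.le_add_right 1)).op = c n := by
  choose β hβ using fun n => hlift n (c (n + N))
  -- `c (n + 1 + k)` and `c (n + (k + 1))` live in different types
  have transport : ∀ {n j j' : ℕ} (e : j = j') (h : n ≤ j) (h' : n ≤ j'),
      c j ≫ D.map (homOfLE h).op = c j' ≫ D.map (homOfLE h').op := by
    rintro n j _ rfl _ _
    rfl
  let a (n k : ℕ) : H ⟶ D.obj (op n) := c (n + k) ≫ D.map (homOfLE (n.le_add_right k)).op
  have ha : ∀ n k, a (n + 1) k ≫ D.map (homOfLE (n.le_add_right 1)).op = a n (k + 1) := by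
    intro n k
    rw [Category.assoc, ← D.map_comp]
    exact transport (by omega) _ _
  let b (n : ℕ) : H ⟶ X := ∑ m ∈ Finset.range n, β m
  refine ⟨fun n => ∑ k ∈ Finset.range N, a n k - b n ≫ v.app (op n), fun n => ?_⟩
  have hb : b (n + 1) ≫ v.app (op (n + 1)) ≫ D.map (homOfLE (n.le_add_right 1)).op
      = b n ≫ v.app (op n) + β n ≫ v.app (op n) := by
    rw [app_comp_map, ← Preadditive.add_comp]
    exact congrArg (· ≫ _) (Finset.sum_range_succ _ _)
  have hsum : ∑ k ∈ Finset.range N, a n k - ∑ k ∈ Finset.range N, a n (k + 1)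
      = c n - β n ≫ v.app (op n) := by
    have ha₀ : a n 0 = c n := by
      change c n ≫ D.map (𝟙 (op n)) = c n
      rw [D.map_id, Category.comp_id]
    rw [← Finset.sum_sub_distrib, Finset.sum_range_sub', ← hβ, ha₀]
  simp only [Preadditive.sub_comp, Preadditive.sum_comp, ha, Category.assoc, hb]
  calc _ = (∑ k ∈ Finset.range N, a n k - ∑ k ∈ Finset.range N, a n (k + 1))
        + β n ≫ v.app (op n) := by abel
    _ = c n := by rw [hsum]; abel

lemma exists_comp_app_eq_of_compatible {M : ℕ}
    (hinj : ∀ f : H ⟶ X, f ≫ v.app (op M) = 0 → f = 0) (c : ∀ n, H ⟶ D.obj (op n))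
    (hc : ∀ n, c (n + 1) ≫ D.map (homOfLE (n.le_add_right 1)).op = c n) :
    ∃ f : H ⟶ X, ∀ n, f ≫ v.app (op n) = c n := by
  choose g hg using fun n => hlift n (c (n + N))
  have hgc : ∀ {i j : ℕ}, i ≤ j → g j ≫ v.app (op i) = c i := by
    intro i j h
    rw [← app_comp_map v h, ← Category.assoc, ← hg, comp_map_of_compatible hc,
      comp_map_of_compatible hc]
  refine ⟨g M, fun n => ?_⟩
  have hstable : g (n + M) = g M := by
    rw [← sub_eq_zero]
    exact hinj _ (by rw [Preadditive.sub_comp, hgc (by omega), hgc le_rfl, sub_self])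
  rw [← hstable, hgc (by omega)]

end Lift

variable [HasCountableProducts C]

noncomputable def oneSubShift : (∏ᶜ fun n => D.obj (op n)) ⟶ ∏ᶜ fun n => D.obj (op n) :=
  Pi.lift fun n => Pi.π _ n - Pi.π _ (n + 1) ≫ D.map (homOfLE (n.le_add_right 1)).op

@[simp]
lemma oneSubShift_π (n : ℕ) : oneSubShift D ≫ Pi.π _ n
    = Pi.π _ n - Pi.π _ (n + 1) ≫ D.map (homOfLE (n.le_add_right 1)).op :=
  Pi.lift_π _ _

lemma lift_app_comp_oneSubShift : Pi.lift (fun n => v.app (op n)) ≫ oneSubShift D = 0 :=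
  Pi.hom_ext _ _ fun n => by simp [Preadditive.comp_sub, app_comp_map]

section Lift

variable (N : ℕ)
  (hlift : ∀ n (z : H ⟶ D.obj (op (n + N))),
    ∃ g : H ⟶ X, z ≫ D.map (homOfLE (n.le_add_right N)).op = g ≫ v.app (op n))
include hlift

lemma exists_comp_oneSubShift_eq (y : H ⟶ ∏ᶜ fun n => D.obj (op n)) :
    ∃ x, x ≫ oneSubShift D = y := by
  obtain ⟨x, hx⟩ := exists_sub_comp_map_eq D v N hlift fun n => y ≫ Pi.π _ n
  exact ⟨Pi.lift x, Pi.hom_ext _ _ fun n => by simpa [Preadditive.comp_sub] using hx n⟩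

lemma exists_comp_lift_eq_of_comp_oneSubShift_eq_zero {M : ℕ}
    (hinj : ∀ f : H ⟶ X, f ≫ v.app (op M) = 0 → f = 0) (y : H ⟶ ∏ᶜ fun n => D.obj (op n))
    (hy : y ≫ oneSubShift D = 0) : ∃ f : H ⟶ X, f ≫ Pi.lift (fun n => v.app (op n)) = y := by
  obtain ⟨f, hf⟩ := exists_comp_app_eq_of_compatible D v N hlift hinj (fun n => y ≫ Pi.π _ n)
    fun n => by
      have := congrArg (· ≫ Pi.π _ n) hy
      simp only [Category.assoc, oneSubShift_π, Preadditive.comp_sub, zero_comp,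
        sub_eq_zero] at this
      simpa using this.symm
  exact ⟨f, Pi.hom_ext _ _ fun n => by simpa using hf n⟩

end Lift

end InverseSequence

section Tower

variable [Preadditive C] [HasZeroObject C] [HasShift C ℤ]
  [∀ n : ℤ, (shiftFunctor C n).Additive] [Pretriangulated C]

structure TriangleTower (X : C) where
  F : ℕᵒᵖ ⥤ C
  D : ℕᵒᵖ ⥤ C
  u : F ⟶ (Functor.const ℕᵒᵖ).obj X
  v : (Functor.const ℕᵒᵖ).obj X ⟶ D
  w : D ⟶ F ⋙ shiftFunctor C (1 : ℤ)
  distinguished : ∀ n, Triangle.mk (u.app n) (v.app n) (w.app n) ∈ distTriang C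

namespace TriangleTower

variable {X : C} (T : TriangleTower X) {𝒢 : Set C} {N : ℕ}
  (hphantom : ∀ n : ℕ, IsPhantom 𝒢 (T.F.map (homOfLE (n.le_add_right N)).op))
include hphantom

lemma exists_comp_map_eq_comp_v (h𝒢 : ∀ G ∈ 𝒢, G⟦(-1 : ℤ)⟧ ∈ 𝒢) {H : C} (hH : H ∈ 𝒢)
    (n : ℕ) (z : H ⟶ T.D.obj (op (n + N))) :
    ∃ g : H ⟶ X, z ≫ T.D.map (homOfLE (n.le_add_right N)).op = g ≫ T.v.app (op n) := by
  have hw := T.w.naturality (homOfLE (n.le_add_right N)).op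
  dsimp at hw
  have hz : (z ≫ T.D.map (homOfLE (n.le_add_right N)).op) ≫ T.w.app (op n) = 0 := by
    rw [Category.assoc, hw, ← Category.assoc]
    exact (hphantom n).shift h𝒢 H hH _
  exact Triangle.coyoneda_exact₃ _ (T.distinguished (op n)) _ hz

lemma eq_zero_of_comp_v_eq_zero {H : C} (hH : H ∈ 𝒢) {f : H ⟶ X}
    (hf : f ≫ T.v.app (op (0 + N)) = 0) : f = 0 := by
  obtain ⟨g : H ⟶ T.F.obj (op (0 + N)), rfl⟩ :=
    Triangle.coyoneda_exact₂ _ (T.distinguished (op (0 + N))) f hf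
  have hu := T.u.naturality (homOfLE (Nat.le_add_right 0 N)).op
  dsimp at hu
  rw [Category.comp_id] at hu
  change g ≫ T.u.app (op (0 + N)) = 0
  rw [← hu, ← Category.assoc, hphantom 0 H hH g, zero_comp]

variable [HasCountableProducts C]

open InverseSequence in
theorem isIso_of_distTriang_oneSubShift (h𝒢 : SigmaStable 𝒢)
    (hgen : ∀ Y : C, (∀ G ∈ 𝒢, ∀ f : G ⟶ Y, f = 0) → IsZero Y) {Λ : C}
    {lam : Λ ⟶ ∏ᶜ fun n => T.D.obj (op n)} {nu : _ ⟶ Λ⟦(1 : ℤ)⟧}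
    (hΛ : Triangle.mk lam (oneSubShift T.D) nu ∈ distTriang C) {κ : X ⟶ Λ}
    (hκ : κ ≫ lam = Pi.lift fun n => T.v.app (op n)) : IsIso κ := by
  have hlift {G : C} (hG : G ∈ 𝒢) :=
    T.exists_comp_map_eq_comp_v hphantom (fun G hG => (h𝒢 G hG).2) hG
  have hinj {G : C} (hG : G ∈ 𝒢) {f : G ⟶ X} :=
    T.eq_zero_of_comp_v_eq_zero hphantom hG (f := f)
  refine isIso_of_bijective_on_generators (fun G hG => (h𝒢 G hG).2) hgen κ
    (fun G hG f hf => hinj hG ?_) (fun G hG g => ?_)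
  · calc f ≫ T.v.app (op (0 + N)) = ((f ≫ κ) ≫ lam) ≫ Pi.π _ (0 + N) := by
          rw [Category.assoc f, hκ, Category.assoc, Pi.lift_π]
      _ = 0 := by rw [hf, zero_comp, zero_comp]
  · have hlam : lam ≫ oneSubShift T.D = 0 := comp_distTriang_mor_zero₁₂ _ hΛ
    obtain ⟨f, hf⟩ := exists_comp_lift_eq_of_comp_oneSubShift_eq_zero T.D T.v N (hlift hG)
      (fun _ => hinj hG) (g ≫ lam) (by rw [Category.assoc, hlam, comp_zero])
    refine ⟨f, sub_eq_zero.1 (Triangle.eq_zero_of_comp_mor₁_eq_zero hΛ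
      (exists_comp_oneSubShift_eq T.D T.v N (hlift (h𝒢 G hG).1)) ?_)⟩
    change (f ≫ κ - g) ≫ lam = 0
    rw [Preadditive.sub_comp, Category.assoc, hκ, hf, sub_self]

end TriangleTower

end Tower

section Approximation

variable [Preadditive C] [HasZeroObject C] [HasShift C ℤ]
  [∀ n : ℤ, (shiftFunctor C n).Additive] [Pretriangulated C]

structure ApproxTriangle (L : Set C) (X : C) where
  F : C
  D : C
  u : F ⟶ X
  v : X ⟶ D
  w : D ⟶ F⟦(1 : ℤ)⟧
  distinguished : Triangle.mk u v w ∈ distTriang C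
  mem : D ∈ L

open ZeroObject

variable [HasProducts.{max u v} C] {L 𝒞 : Set C} (hL : IsColocalizing L) (h𝒞L : 𝒞 ⊆ L)
include hL h𝒞L

lemma ApproxTriangle.exists_refinement {X : C} (A : ApproxTriangle L X) :
    ∃ (A' : ApproxTriangle L X) (χ : A'.F ⟶ A.F) (t : A'.D ⟶ A.D), IsCophantom 𝒞 χ ∧
      χ ≫ A.u = A'.u ∧ A'.v ≫ t = A.v ∧ A'.w ≫ χ⟦(1 : ℤ)⟧' = t ≫ A.w := by
  let e : (Σ c : 𝒞, (A.F ⟶ c)) → C := fun σ => σ.1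
  obtain ⟨F', D', χ, v', w', a, m, hχ, hT', hE⟩ :=
    exists_distTriang_comp_of_distTriang A.distinguished (Pi.lift fun σ => σ.2 : A.F ⟶ ∏ᶜ e)
  have hD' : D' ∈ L :=
    hL.ext₂ _ hE (hL.products _ e inferInstance fun σ => h𝒞L σ.1.2) A.mem
  obtain ⟨t : D' ⟶ A.D, ht₁ : v' ≫ t = 𝟙 X ≫ A.v, ht₂⟩ :=
    complete_distinguished_triangle_morphism _ _ hT' A.distinguished χ (𝟙 X) (Category.comp_id _)
  refine ⟨⟨F', D', χ ≫ A.u, v', w', hT', hD'⟩, χ, t, fun c hc g => ?_, rfl, ?_, ht₂⟩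
  · have hg : g = (Pi.lift fun σ => σ.2 : A.F ⟶ ∏ᶜ e) ≫ Pi.π e ⟨⟨c, hc⟩, g⟩ :=
      (Pi.lift_π (fun σ : Σ c : 𝒞, (A.F ⟶ c) => σ.2) ⟨⟨c, hc⟩, g⟩).symm
    rw [hg, ← Category.assoc, hχ, zero_comp]
  · rw [ht₁, Category.id_comp]

theorem TriangleTower.exists_cophantom_of_isColocalizing (X : C) :
    ∃ T : TriangleTower X, (∀ n, T.D.obj n ∈ L) ∧
      ∀ n : ℕ, IsCophantom 𝒞 (T.F.map (homOfLE (n.le_add_right 1)).op) := by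
  choose next χ t hχ hu hv hw using ApproxTriangle.exists_refinement (𝒞 := 𝒞) hL h𝒞L (X := X)
  let A (n : ℕ) : ApproxTriangle L X := Nat.rec
    ⟨X, 0, 𝟙 X, 0, 0, contractible_distinguished X, hL.zero _ (isZero_zero C)⟩
    (fun _ A => next A) n
  let F := Functor.ofOpSequence (X := fun n => (A n).F) fun n => χ (A n)
  let D := Functor.ofOpSequence (X := fun n => (A n).D) fun n => t (A n)
  refine ⟨⟨F, D, NatTrans.ofOpSequence (fun n => (A n).u) fun n => ?_,
    NatTrans.ofOpSequence (fun n => (A n).v) fun n => ?_,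
    NatTrans.ofOpSequence (G := F ⋙ shiftFunctor C (1 : ℤ)) (fun n => (A n).w) fun n => ?_,
    fun n => (A n.unop).distinguished⟩, fun n => (A n.unop).mem, fun n => ?_⟩
  · simp only [F, Functor.ofOpSequence_map_homOfLE_succ, Functor.const_obj_map]
    exact (hu (A n)).trans (Category.comp_id _).symm
  · simp only [D, Functor.ofOpSequence_map_homOfLE_succ, Functor.const_obj_map]
    exact (Category.id_comp _).trans (hv (A n)).symm
  · simp only [F, D, Functor.ofOpSequence_map_homOfLE_succ, Functor.comp_map]
    exact (hw (A n)).symm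
  · simp only [F, Functor.ofOpSequence_map_homOfLE_succ]
    exact hχ (A n)

end Approximation

/-- If a Σ-stable set `𝒢` generates `T`, and `𝒞` is a Σ-stable set with
`Ψ(𝒞)^s ⊆ Φ(𝒢)` for some `s ≥ 1`, then `T = Coloc 𝒞`, i.e. every object of `T` lies
in every colocalizing subcategory containing `𝒞`. -/
theorem stmt11 [Preadditive C] [HasZeroObject C] [HasShift C ℤ]
    [∀ n : ℤ, (shiftFunctor C n).Additive] [Pretriangulated C]
    [HasProducts.{max u v} C]
    (𝒞 𝒢 : Set C) (h𝒞 : SigmaStable 𝒞) (h𝒢 : SigmaStable 𝒢)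
    (hgen : ∀ X : C, (∀ G ∈ 𝒢, ∀ f : G ⟶ X, f = 0) → IsZero X)
    (s : ℕ) (hs : 1 ≤ s)
    (hPow : ∀ ⦃X Y : C⦄ (f : X ⟶ Y),
      compPow (fun _ _ ψ => IsCophantom 𝒞 ψ) (s - 1) f → IsPhantom 𝒢 f) :
    ∀ (L : Set C), IsColocalizing L → 𝒞 ⊆ L → ∀ X : C, X ∈ L := by
  intro L hL h𝒞L X
  obtain ⟨T, hmem, hcoph⟩ := TriangleTower.exists_cophantom_of_isColocalizing hL h𝒞L X
  have hphantom (n : ℕ) : IsPhantom 𝒢 (T.F.map (homOfLE (n.le_add_right (s - 1 + 1))).op) :=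
    hPow _ (compPow_map_homOfLE _ T.F hcoph n (s - 1))
  obtain ⟨Λ, lam, nu, hΛ⟩ := distinguished_cocone_triangle₁ (InverseSequence.oneSubShift T.D)
  obtain ⟨κ, hκ⟩ := Triangle.coyoneda_exact₂ _ hΛ _
    (InverseSequence.lift_app_comp_oneSubShift T.D T.v)
  have : IsIso κ := T.isIso_of_distTriang_oneSubShift hphantom h𝒢 hgen hΛ hκ.symm
  have hP : (∏ᶜ fun n => T.D.obj (op n)) ∈ L := hL.piObj_mem _ fun n => hmem (op n)
  exact hL.iso_closed _ _ (asIso κ).symm (hL.mem₁_of_distTriang hΛ hP hP)
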